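/- Let T be a finite Wang tile set, let a, b ∈ T be tiles whose colors match when b is placed immediately to the right of a, and let a_0, b_0 be two new symbols, a_0 having the same edge colors as a and b_0 the same edge colors as b. Define s(a_0) = (1,0), s(b_0) = (−1,0) and s(t) = (0,0) for t ∈ T. Let σ_{a,b} be the two-dimensional substitution on A = T ∪ {a_0,b_0} with base rule t ↦ {[(0,0),t]} for all t ∈ Aance and with exactly the following concatenation rules: (t,t',(1,0)) ↦ (2,0) + s(t') − s(t) for every pair (t,t') ∈ A² whose colors match horizontally (right edge of t against left edge of t'), except the pair (t,t') = (a_0,b_0); and (t,t',(0,1)) ↦ (0,1) + s(t') − s(t) for every pair (t,t') ∈ A² whose colors match vertically (top edge of t against bottom edge of t'). Then σ_{a,b} is consistent; moreover, every C_{σ_{a,b}}-path γ from a cell [(0,0),t] to a cell [(x,y),t'] satisfies ω_{σ_{a,b}}(γ) = (2x, y) + s(t') − s(t). -/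

import Mathlib

open scoped Classical

/-- A combinatorial substitution on alphabet `A` with vectors in `V`:
a base rule sending each letter to a pattern, together with a deterministic
finite set of concatenation rules.  `rule t t' u = some v` encodes the
concatenation rule `(t, t', u) ↦ v`. -/
structure Subst (A : Type*) (V : Type*) [AddCommGroup V] where
  /-- the base rule -/
  base : A → Finset (V × A)
  /-- the image of a letter is a pattern: its cells have distinct vectors -/
  basePat : ∀ t : A, ∀ c ∈ base t, ∀ c' ∈ base t, c.1 = c'.1 → c = c'
  /-- the concatenation rules, as a partial function -/
  rule : A → A → V → Option V
  /-- there are finitely many concatenation rules -/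
  finiteRules : {u : V | ∃ t t', rule t t' u ≠ none}.Finite
  /-- determinism: no two rules with left-hand sides `(t,t',u)` and `(t,t',-u)` -/
  det : ∀ t t' u, (rule t t' u).isSome → (rule t t' (-u)).isSome → u = -u

/-- A pattern is a finite set of cells with pairwise distinct vectors. -/
def IsPattern {V A : Type*} (P : Finset (V × A)) : Prop :=
  ∀ c ∈ P, ∀ c' ∈ P, c.1 = c'.1 → c = c'

namespace Subst

variable {A V : Type*} [AddCommGroup V]

/-- `σ_rule(c, c')`: the relative position of the images of the two cells
`c`, `c'`, when some concatenation rule applies to them. -/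
def ruleVec (σ : Subst A V) (c c' : V × A) : Option V :=
  match σ.rule c.2 c'.2 (c'.1 - c.1) with
  | some v => some v
  | none => (σ.rule c'.2 c.2 (c.1 - c'.1)).map (fun v => -v)

/-- The image vector `ω_σ(γ)` of a path `γ`. -/
def omega (σ : Subst A V) (γ : List (V × A)) : V :=
  ((γ.zip γ.tail).map (fun p => (σ.ruleVec p.1 p.2).getD 0)).sum

/-- A `C_σ`-path: a nonempty sequence of cells in which any two consecutive
cells form a translated copy of a starting pattern of `σ`, and any two cells
with the same vector are equal. -/
def IsPath (σ : Subst A V) (γ : List (V × A)) : Prop :=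
  γ ≠ [] ∧ γ.Chain' (fun c c' => (σ.ruleVec c c').isSome) ∧
    ∀ c ∈ γ, ∀ c' ∈ γ, c.1 = c'.1 → c = c'

/-- A `C_σ`-path of the pattern `P`. -/
def IsPathOf (σ : Subst A V) (P : Finset (V × A)) (γ : List (V × A)) : Prop :=
  σ.IsPath γ ∧ ∀ c ∈ γ, c ∈ P

/-- A `C_σ`-loop of the pattern `P`. -/
def IsLoopOf (σ : Subst A V) (P : Finset (V × A)) (γ : List (V × A)) : Prop :=
  σ.IsPathOf P γ ∧ γ.head? = γ.getLast?

/-- `P` is `C_σ`-covered: any two of its cells are joined by a `C_σ`-path of `P`. -/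
def Covered (σ : Subst A V) (P : Finset (V × A)) : Prop :=
  ∀ c ∈ P, ∀ c' ∈ P,
    ∃ γ, σ.IsPathOf P γ ∧ γ.head? = some c ∧ γ.getLast? = some c'

/-- `σ` is consistent on `P`: any two `C_σ`-paths of `P` with the same first
and last cells have the same image vector. -/
def ConsistentOn (σ : Subst A V) (P : Finset (V × A)) : Prop :=
  ∀ γ γ' : List (V × A), σ.IsPathOf P γ → σ.IsPathOf P γ' →
    γ.head? = γ'.head? → γ.getLast? = γ'.getLast? → σ.omega γ = σ.omega γ'

/-- `σ` is consistent: it is consistent on every `C_σ`-covered pattern. -/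
def Consistent (σ : Subst A V) : Prop :=
  ∀ P : Finset (V × A), IsPattern P → σ.Covered P → σ.ConsistentOn P

/-- The support of the image of a letter. -/
noncomputable def supp (σ : Subst A V) (t : A) : Finset V :=
  (σ.base t).image Prod.fst

/-- `σ` is non-overlapping on `P`: the images of two distinct cells of `P`
joined by a `C_σ`-path of `P` have disjoint supports. -/
def NonOverlappingOn (σ : Subst A V) (P : Finset (V × A)) : Prop :=
  ∀ c ∈ P, ∀ c' ∈ P, c ≠ c' → ∀ γ, σ.IsPathOf P γ →
    γ.head? = some c → γ.getLast? = some c' →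
    ∀ b ∈ σ.supp c'.2, σ.omega γ + b ∉ σ.supp c.2

/-- `σ` is non-overlapping: it is non-overlapping on every `C_σ`-covered pattern. -/
def NonOverlapping (σ : Subst A V) : Prop :=
  ∀ P : Finset (V × A), IsPattern P → σ.Covered P → σ.NonOverlappingOn P

end Subst

/-- A Wang tile: a unit square with a color on each of its four edges. -/
structure WangTile (C : Type*) where
  north : C
  south : C
  east : C
  west : C

/-- The alphabet `A = T ∪ {a₀, b₀}`: Wang tiles together with the two new
symbols `a₀` and `b₀`. -/
inductive LetterAB (C : Type*) : Type _ where
  | tile : WangTile C → LetterAB C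
  | a0 : LetterAB C
  | b0 : LetterAB C

/-- The Wang tile carried by a letter: `a₀` has the edge colors of `a` and
`b₀` has the edge colors of `b`. -/
def LetterAB.toTile {C : Type*} (a b : WangTile C) : LetterAB C → WangTile C
  | .tile t => t
  | .a0 => a
  | .b0 => b

/-- Membership of a letter in `A = T ∪ {a₀, b₀}`. -/
def LetterAB.inA {C : Type*} (T : Finset (WangTile C)) : LetterAB C → Prop
  | .tile t => t ∈ T
  | .a0 => True
  | .b0 => True

/-- The shift `s`: `s a₀ = (1,0)`, `s b₀ = (-1,0)`, `s t = (0,0)` otherwise. -/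
def sfun {C : Type*} : LetterAB C → ℤ × ℤ
  | .tile _ => (0, 0)
  | .a0 => (1, 0)
  | .b0 => (-1, 0)

/-- The substitution `σ_{a,b}`: horizontal rules
`(t, t', (1,0)) ↦ (2,0) + s t' - s t` for all horizontally matching pairs
except `(a₀, b₀)`, and vertical rules `(t, t', (0,1)) ↦ (0,1) + s t' - s t`
for all vertically matching pairs. -/
noncomputable def sigmaAB {C : Type*} (T : Finset (WangTile C))
    (a b : WangTile C) : Subst (LetterAB C) (ℤ × ℤ) where
  base t := {((0, 0), t)}
  basePat := by
    intro t c hc c' hc' _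
    rw [Finset.mem_singleton] at hc hc'
    rw [hc, hc']
  rule t t' u :=
    if u = ((1 : ℤ), (0 : ℤ)) ∧ LetterAB.inA T t ∧ LetterAB.inA T t' ∧
        (LetterAB.toTile a b t).east = (LetterAB.toTile a b t').west ∧
        ¬(t = LetterAB.a0 ∧ t' = LetterAB.b0)
    then some (((2 : ℤ), (0 : ℤ)) + sfun t' - sfun t)
    else if u = ((0 : ℤ), (1 : ℤ)) ∧ LetterAB.inA T t ∧ LetterAB.inA T t' ∧
        (LetterAB.toTile a b t).north = (LetterAB.toTile a b t').south
    then some (((0 : ℤ), (1 : ℤ)) + sfun t' - sfun t)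
    else none
  finiteRules := by
    apply Set.Finite.subset
      ((Set.finite_singleton ((0, 1) : ℤ × ℤ)).insert ((1, 0) : ℤ × ℤ))
    rintro u ⟨t, t', h⟩
    try simp only at h
    split_ifs at h with h1 h2
    · exact Set.mem_insert_iff.2 (Or.inl h1.1)
    · exact Set.mem_insert_iff.2 (Or.inr h2.1)
    · exact absurd rfl h
  det := by
    intro t t' u h1 h2
    exfalso
    try simp only at h1 h2
    have hu : u = ((1 : ℤ), (0 : ℤ)) ∨ u = ((0 : ℤ), (1 : ℤ)) := by
      split_ifs at h1 with hA hB
      · exact Or.inl hA.1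
      · exact Or.inr hB.1
      · simp at h1
    have hnu : -u = ((1 : ℤ), (0 : ℤ)) ∨ -u = ((0 : ℤ), (1 : ℤ)) := by
      split_ifs at h2 with hC hD
      · exact Or.inl hC.1
      · exact Or.inr hD.1
      · simp at h2
    rcases hu with rfl | rfl <;> rcases hnu with h | h <;> revert h <;> decide

/-!
Every concatenation rule of `σ_{a,b}` sends a pair of cells `c, c'` to `f c' - f c`, where
`f [(x,y), t] = (2x, y) + s t`. Hence the image vector of any `C_σ`-path telescopes to
`f (last cell) - f (first cell)`, which depends only on the endpoints.
-/

namespace Subst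

variable {A V : Type*} [AddCommGroup V]

theorem ruleVec_eq_some {σ : Subst A V} {c c' : V × A} {v : V}
    (h : σ.ruleVec c c' = some v) :
    σ.rule c.2 c'.2 (c'.1 - c.1) = some v ∨
      ∃ w, σ.rule c'.2 c.2 (c.1 - c'.1) = some w ∧ v = -w := by
  unfold ruleVec at h
  rcases hr : σ.rule c.2 c'.2 (c'.1 - c.1) with _ | w
  · rw [hr, Option.map_eq_some_iff] at h
    obtain ⟨w, hw, rfl⟩ := h
    exact Or.inr ⟨w, hw, rfl⟩
  · rw [hr] at h
    exact Or.inl (congrArg some (Option.some_inj.1 h))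

theorem omega_singleton (σ : Subst A V) (c : V × A) : σ.omega [c] = 0 := by
  simp [omega]

theorem omega_cons_cons (σ : Subst A V) (c c' : V × A) (l : List (V × A)) :
    σ.omega (c :: c' :: l) = (σ.ruleVec c c').getD 0 + σ.omega (c' :: l) := by
  simp [omega]

def IsPotential (σ : Subst A V) (f : V × A → V) : Prop :=
  ∀ c c' v, σ.ruleVec c c' = some v → v = f c' - f c

theorem IsPotential.omega_eq_sub {σ : Subst A V} {f : V × A → V} (hf : σ.IsPotential f) :
    ∀ {γ : List (V × A)}, γ.IsChain (fun c c' => (σ.ruleVec c c').isSome) →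
      ∀ {c c' : V × A}, γ.head? = some c → γ.getLast? = some c' →
        σ.omega γ = f c' - f c
  | [], _, _, _, h, _ => by simp at h
  | [d], _, c, c', h, h' => by
    simp only [List.head?_cons, List.getLast?_singleton, Option.some_inj] at h h'
    subst h h'
    rw [omega_singleton, sub_self]
  | d :: d' :: l, hγ, c, c', h, h' => by
    simp only [List.head?_cons, Option.some_inj] at h
    subst h
    rw [List.getLast?_cons_cons] at h'
    obtain ⟨hdd', hl⟩ := List.isChain_cons_cons.1 hγ
    obtain ⟨v, hv⟩ := Option.isSome_iff_exists.1 hdd'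
    rw [omega_cons_cons, hf.omega_eq_sub hl rfl h', hv, Option.getD_some, hf _ _ _ hv]
    abel

theorem IsPotential.consistent {σ : Subst A V} {f : V × A → V} (hf : σ.IsPotential f) :
    σ.Consistent := by
  rintro P - - γ γ' ⟨⟨hne, hγ, -⟩, -⟩ ⟨⟨-, hγ', -⟩, -⟩ hhead hlast
  have hc := List.head?_eq_some_head hne
  have hc' := List.getLast?_eq_some_getLast hne
  rw [hf.omega_eq_sub hγ hc hc', hf.omega_eq_sub hγ' (hhead ▸ hc) (hlast ▸ hc')]

end Subst

def potentialAB {C : Type*} (c : (ℤ × ℤ) × LetterAB C) : ℤ × ℤ :=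
  ((2 * c.1.1, c.1.2) : ℤ × ℤ) + sfun c.2

theorem sigmaAB_rule_eq_some {C : Type*} {T : Finset (WangTile C)} {a b : WangTile C}
    {t t' : LetterAB C} {u v : ℤ × ℤ} (h : (sigmaAB T a b).rule t t' u = some v) :
    v = ((2 * u.1, u.2) : ℤ × ℤ) + sfun t' - sfun t := by
  simp only [sigmaAB] at h
  split_ifs at h with hhor hver <;> rw [Option.some_inj] at h <;> subst h
  · rw [hhor.1]; norm_num
  · rw [hver.1]; norm_num

theorem sigmaAB_isPotential {C : Type*} (T : Finset (WangTile C)) (a b : WangTile C) :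
    (sigmaAB T a b).IsPotential potentialAB := by
  intro c c' v h
  rcases Subst.ruleVec_eq_some h with hv | ⟨w, hw, rfl⟩
  · rw [sigmaAB_rule_eq_some hv, potentialAB, potentialAB]
    ext <;> simp <;> ring
  · rw [sigmaAB_rule_eq_some hw, potentialAB, potentialAB]
    ext <;> simp <;> ring

theorem sigmaAB_consistent_general {C : Type*} (T : Finset (WangTile C))
    (a b : WangTile C) :
    (sigmaAB T a b).Consistent ∧
      ∀ (t t' : LetterAB C) (x y : ℤ) (γ : List ((ℤ × ℤ) × LetterAB C)),
        (sigmaAB T a b).IsPath γ →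
        γ.head? = some ((((0 : ℤ), (0 : ℤ)) : ℤ × ℤ), t) →
        γ.getLast? = some ((((x, y) : ℤ × ℤ)), t') →
        (sigmaAB T a b).omega γ = ((2 * x, y) : ℤ × ℤ) + sfun t' - sfun t := by
  refine ⟨(sigmaAB_isPotential T a b).consistent, fun t t' x y γ hγ hhead hlast => ?_⟩
  rw [(sigmaAB_isPotential T a b).omega_eq_sub hγ.2.1 hhead hlast, potentialAB, potentialAB]
  ext <;> simp

/-- Let `a, b ∈ T` be horizontally matching Wang tiles.
The substitution `σ_{a,b}` is consistent; moreover every `C_{σ_{a,b}}`-path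
from a cell `[(0,0), t]` to a cell `[(x,y), t']` has image vector
`(2x, y) + s t' - s t`. -/
theorem sigmaAB_consistent {C : Type*} (T : Finset (WangTile C))
    (a b : WangTile C) (ha : a ∈ T) (hb : b ∈ T) (hab : a.east = b.west) :
    (sigmaAB T a b).Consistent ∧
      ∀ (t t' : LetterAB C) (x y : ℤ) (γ : List ((ℤ × ℤ) × LetterAB C)),
        (sigmaAB T a b).IsPath γ →
        γ.head? = some ((((0 : ℤ), (0 : ℤ)) : ℤ × ℤ), t) →
        γ.getLast? = some ((((x, y) : ℤ × ℤ)), t') →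
        (sigmaAB T a b).omega γ = ((2 * x, y) : ℤ × ℤ) + sfun t' - sfun t :=
  sigmaAB_consistent_general T a b
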